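/- arXiv:2412.19232 — 2 statements merged into one kernel-verified Lean document; each statement's English description precedes it below -/
import Mathlib

section
/- Let n ≥ 1, let d be a natural number with 1 ≤ d ≤ 2^{n-1}, let l = ⌈log₂ d⌉ and D = 2^l. Then for p = D - d, the bitwise XOR of the binary representations of p + d and p equals the string x whose k-th bit (LSB-first) is ⌈d / 2^{k-1}⌉ mod 2 for k ≤ l+1 and 0 for k > l+1, provided d is not a power of 2. -/
/-!
Since `p + d = 2 ^ l` with `p = 2 ^ l - d < 2 ^ l`, the XOR only adds the bit `l` to `p`.
Below `l`, `⌊(2 ^ l - d) / 2 ^ j⌋ = 2 ^ (l - j) - ⌈d / 2 ^ j⌉`, and `2 ^ (l - j)` is even, so bit `j`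
of `p` is the parity of `⌈d / 2 ^ j⌉`; the expression `(d + 2 ^ j - 1) / 2 ^ j` of the statement
is Mathlib's `d ⌈/⌉ 2 ^ j`.
-/

/-- The `k`-th bit (0-indexed, LSB-first) of a natural number. -/
def bitn (a k : ℕ) : ℕ := a / 2 ^ k % 2

lemma bitn_eq_testBit (a k : ℕ) : bitn a k = (a.testBit k).toNat := by
  rw [Nat.testBit_eq_decide_div_mod_eq, bitn]
  rcases Nat.mod_two_eq_zero_or_one (a / 2 ^ k) with h | h <;> simp [h]

lemma bitn_eq_zero_of_lt_two_pow {a k : ℕ} (h : a < 2 ^ k) : bitn a k = 0 := by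
  simp [bitn_eq_testBit, Nat.testBit_lt_two_pow h]

lemma bitn_two_pow_xor {p l : ℕ} (j : ℕ) (hp : p < 2 ^ l) :
    bitn (2 ^ l ^^^ p) j = if j = l then 1 else bitn p j := by
  by_cases hj : j = l
  · subst hj
    simp [bitn_eq_testBit, Nat.testBit_xor, Nat.testBit_lt_two_pow hp]
  · simp [bitn_eq_testBit, Nat.testBit_xor, Ne.symm hj, hj]

lemma Nat.mul_sub_div_eq_sub_ceilDiv {a m d : ℕ} (hm : 0 < m) (hd : d ≤ a * m) :
    (a * m - d) / m = a - d ⌈/⌉ m := by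
  set c := d ⌈/⌉ m
  have hc_ge : d ≤ c * m := mul_comm m c ▸ le_smul_ceilDiv hm
  have hc_lt : c * m < d + m := by
    have : c * m ≤ d + m - 1 := Nat.div_mul_le_self (d + m - 1) m
    omega
  have hca : c ≤ a := (ceilDiv_le_iff_le_mul hm).2 (mul_comm a m ▸ hd)
  apply Nat.div_eq_of_lt_le
  · rw [Nat.sub_mul]; omega
  · rw [Nat.add_one_mul, Nat.sub_mul]
    have := Nat.mul_le_mul_right m hca
    omega

lemma bitn_two_pow_sub {d l j : ℕ} (hj : j < l) (hd : d ≤ 2 ^ l) :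
    bitn (2 ^ l - d) j = d ⌈/⌉ 2 ^ j % 2 := by
  have hsplit : 2 ^ l = 2 * 2 ^ (l - j - 1) * 2 ^ j := by
    rw [← pow_succ', ← pow_add]; congr 1; omega
  have hc : d ⌈/⌉ 2 ^ j ≤ 2 * 2 ^ (l - j - 1) :=
    (ceilDiv_le_iff_le_mul (by positivity)).2 (by rw [mul_comm, ← hsplit]; exact hd)
  rw [bitn, hsplit, Nat.mul_sub_div_eq_sub_ceilDiv (by positivity) (hsplit ▸ hd)]
  omega

lemma Nat.ceilDiv_eq_one {d m : ℕ} (hd : 0 < d) (hdm : d ≤ m) : d ⌈/⌉ m = 1 := by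
  rw [Nat.ceilDiv_eq_add_pred_div]
  apply Nat.div_eq_of_lt_le <;> omega

theorem xor_of_pow_sub_band_general (n d : ℕ) (hd1 : 1 ≤ d) :
    ∀ k, 1 ≤ k → k ≤ n →
      bitn ((((2 ^ Nat.clog 2 d - d) + d)) ^^^ (2 ^ Nat.clog 2 d - d)) (k - 1) =
        if k ≤ Nat.clog 2 d + 1 then (d + 2 ^ (k - 1) - 1) / 2 ^ (k - 1) % 2 else 0 := by
  intro k hk _
  set l := Nat.clog 2 d
  have hdl : d ≤ 2 ^ l := Nat.le_pow_clog one_lt_two d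
  rw [Nat.sub_add_cancel hdl, bitn_two_pow_xor _ (by omega), ← Nat.ceilDiv_eq_add_pred_div]
  rcases lt_trichotomy (k - 1) l with hj | hj | hj
  · rw [if_neg hj.ne, if_pos (by omega), bitn_two_pow_sub hj hdl]
  · rw [if_pos hj, if_pos (by omega), hj, Nat.ceilDiv_eq_one hd1 hdl]
  · have : 2 ^ l - d < 2 ^ (k - 1) :=
      (Nat.sub_le _ _).trans_lt (Nat.pow_lt_pow_right one_lt_two hj)
    rw [if_neg hj.ne', if_neg (by omega), bitn_eq_zero_of_lt_two_pow this]

/-- Let `1 ≤ d ≤ 2^(n-1)` with `d` not a power of two, `l = ⌈log₂ d⌉`, `D = 2^l` and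
`p = D - d`.  Then the bitwise XOR of the binary representations of `p + d` and `p` is the
string `x` whose `k`-th bit (LSB-first, `1 ≤ k ≤ n`) is `⌈d / 2^(k-1)⌉ mod 2` for
`k ≤ l + 1` and `0` for `k > l + 1`. -/
theorem xor_of_pow_sub_band (n d : ℕ) (hn : 1 ≤ n) (hd1 : 1 ≤ d) (hd2 : d ≤ 2 ^ (n - 1))
    (hnp : ∀ t : ℕ, d ≠ 2 ^ t) :
    ∀ k, 1 ≤ k → k ≤ n →
      bitn ((((2 ^ Nat.clog 2 d - d) + d)) ^^^ (2 ^ Nat.clog 2 d - d)) (k - 1) =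
        if k ≤ Nat.clog 2 d + 1 then (d + 2 ^ (k - 1) - 1) / 2 ^ (k - 1) % 2 else 0 :=
  xor_of_pow_sub_band_general n d hd1
end

section
/- For natural numbers d ≥ 1 and n with d ≤ 2^{n-1}, the quantity 1 + ∑_{k=1}^{d} (n − ⌈log₂ k⌉) equals 2^{L(d)} + (n − L(d))·d, where L(d) = ⌊log₂ d⌋ + 1 is the number of bits in the binary representation of d. -/
/-!
Write `L = ⌊log₂ d⌋ + 1`. Since `⌈log₂ (k + 1)⌉ = ⌊log₂ k⌋ + 1` for `k ≥ 1`, adding the term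
`k = d + 1` to `∑_{k ≤ d} ⌈log₂ k⌉` adds `L`, and `L` itself grows by one exactly when `d + 1` is
a power of two. Induction on `d` then gives `∑_{k=1}^{d} ⌈log₂ k⌉ = L d + 1 - 2^L`, and in
base `b` likewise `(b - 1) ∑_{k=1}^{d} ⌈log_b k⌉ = (b - 1) L d + 1 - b^L`. The hypothesis
`d ≤ 2^(n-1)` keeps every `⌈log₂ k⌉` and `L` at most `n`, so no subtraction in the theorem
truncates.
-/

namespace Nat

theorem clog_succ_eq_log_add_one {b n : ℕ} (hb : 1 < b) (hn : n ≠ 0) :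
    clog b (n + 1) = log b n + 1 := by
  apply le_antisymm
  · exact (clog_le_iff_le_pow hb).mpr (lt_pow_succ_log_self hb n)
  · rw [succ_le_iff, lt_clog_iff_pow_lt hb]
    exact lt_succ_of_le (pow_log_le_self b hn)

theorem log_succ_of_pow_log_succ_ne {b n : ℕ} (hb : 1 < b) (hn : n ≠ 0)
    (h : b ^ (log b n + 1) ≠ n + 1) : log b (n + 1) = log b n :=
  log_eq_of_pow_le_of_lt_pow ((pow_log_le_self b hn).trans n.le_succ)
    (lt_of_le_of_ne (lt_pow_succ_log_self hb n) h.symm)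

theorem sub_one_mul_sum_clog_add_pow {b d : ℕ} (hb : 1 < b) (hd : d ≠ 0) :
    (b - 1) * ∑ k ∈ Finset.Icc 1 d, clog b k + b ^ (log b d + 1) =
      (b - 1) * (log b d + 1) * d + 1 := by
  induction d, one_le_iff_ne_zero.mpr hd using le_induction with
  | base => simp [log_one_right, clog_one_right]; omega
  | succ d hd1 ih =>
    have hd0 : d ≠ 0 := by omega
    rw [Finset.sum_Icc_succ_top (by omega), clog_succ_eq_log_add_one hb hd0, mul_add]
    specialize ih hd0
    obtain ⟨c, rfl⟩ : ∃ c, b = c + 1 := ⟨b - 1, by omega⟩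
    simp only [Nat.add_sub_cancel] at ih ⊢
    by_cases hpow : (c + 1) ^ (log (c + 1) d + 1) = d + 1
    · rw [← hpow, log_pow hb, pow_succ, hpow]
      rw [hpow] at ih
      linear_combination ih
    · rw [log_succ_of_pow_log_succ_ne hb hd0 hpow]
      linear_combination ih

end Nat

/-- For `d ≥ 1`, `n ≥ 1` with `d ≤ 2^(n-1)`, the number of sets in the Pauli decomposition
of a `d`-band `2^n × 2^n` matrix satisfies
`1 + ∑_{k=1}^{d} (n − ⌈log₂ k⌉) = 2^{L(d)} + (n − L(d))·d`,
where `L(d) = ⌊log₂ d⌋ + 1` is the binary length of `d`. -/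
theorem number_of_sets_closed_form (n d : ℕ) (hn : 1 ≤ n) (hd : 1 ≤ d)
    (hdn : d ≤ 2 ^ (n - 1)) :
    1 + ∑ k ∈ Finset.Icc 1 d, (n - Nat.clog 2 k) =
      2 ^ (Nat.log 2 d + 1) + (n - (Nat.log 2 d + 1)) * d := by
  have hclog_d : Nat.clog 2 d ≤ n - 1 := Nat.clog_le_of_le_pow hdn
  have hclog_le : ∀ k ∈ Finset.Icc 1 d, Nat.clog 2 k ≤ n := fun k hk =>
    (Nat.clog_mono_right 2 (Finset.mem_Icc.mp hk).2).trans (hclog_d.trans (Nat.sub_le n 1))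
  have hL : Nat.log 2 d + 1 ≤ n := by
    have := Nat.log_le_clog 2 d
    omega
  have hsum := Nat.sub_one_mul_sum_clog_add_pow one_lt_two (Nat.one_le_iff_ne_zero.mp hd)
  simp only [Nat.reduceSub, one_mul] at hsum
  have hsub : ∑ k ∈ Finset.Icc 1 d, (n - Nat.clog 2 k) =
      n * d - ∑ k ∈ Finset.Icc 1 d, Nat.clog 2 k := by
    rw [Finset.sum_tsub_distrib _ hclog_le, Finset.sum_const, Nat.card_Icc, smul_eq_mul,
      Nat.add_sub_cancel, mul_comm]
  have hLn : (Nat.log 2 d + 1) * d ≤ n * d := Nat.mul_le_mul_right d hL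
  have hpow_pos : 0 < 2 ^ (Nat.log 2 d + 1) := Nat.two_pow_pos _
  rw [hsub, Nat.sub_mul]
  omega
end
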